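/- arXiv:2004.10124 — 3 statements merged into one kernel-verified Lean document; each statement's English description precedes it below -/
import Mathlib

section
/- There is a constant C > 0 (depending only on N, R, k) such that for all x ∈ ℝ^N and r > 0: C⁻¹ w(B(x,r)) ≤ r^N ∏_{α∈R}(|⟨x,α⟩| + r)^{k(α)} ≤ C w(B(x,r)). -/
open scoped RealInnerProductSpace ENNReal NNReal
open MeasureTheory Metric

lemma dunkl_meas (N : ℕ) (R : Finset (EuclideanSpace ℝ (Fin N)))
    (k : EuclideanSpace ℝ (Fin N) → ℝ) (hk : ∀ α, 0 ≤ k α) :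
    Measurable fun y : EuclideanSpace ℝ (Fin N) =>
      ENNReal.ofReal (∏ α ∈ R, |⟪y, α⟫| ^ (k α)) := by
  apply ENNReal.measurable_ofReal.comp
  apply Finset.measurable_prod
  intro α _
  have h1 : Continuous fun y : EuclideanSpace ℝ (Fin N) => |⟪y, α⟫| :=
    (continuous_id.inner continuous_const).abs
  exact ((Real.continuous_rpow_const (hk α)).comp h1).measurable

lemma exists_generic (N : ℕ) (R : Finset (EuclideanSpace ℝ (Fin N)))
    (hR0 : (0 : EuclideanSpace ℝ (Fin N)) ∉ R) :
    ∃ u : EuclideanSpace ℝ (Fin N), ‖u‖ < 1 ∧ ∀ α ∈ R, ⟪u, α⟫ ≠ 0 := by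
  have hz : volume (⋃ α ∈ R, {y : EuclideanSpace ℝ (Fin N) | ⟪y, α⟫ = 0}) = 0 := by
    refine (measure_biUnion_null_iff R.countable_toSet).2 fun α hα => ?_
    have hα0 : α ≠ 0 := fun h => hR0 (h ▸ hα)
    have hsub : {y : EuclideanSpace ℝ (Fin N) | ⟪y, α⟫ = 0}
        = ((ℝ ∙ α)ᗮ : Submodule ℝ (EuclideanSpace ℝ (Fin N))) := by
      ext y
      simp only [Set.mem_setOf_eq, SetLike.mem_coe,
        Submodule.mem_orthogonal_singleton_iff_inner_right]
      rw [real_inner_comm]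
    rw [hsub]
    refine Measure.addHaar_submodule _ _ ?_
    intro h
    have hmem : α ∈ (ℝ ∙ α)ᗮ := h ▸ Submodule.mem_top
    rw [Submodule.mem_orthogonal_singleton_iff_inner_right] at hmem
    exact hα0 (inner_self_eq_zero.1 hmem)
  by_contra hcon
  push_neg at hcon
  have hsubset : ball (0 : EuclideanSpace ℝ (Fin N)) 1 ⊆
      ⋃ α ∈ R, {y : EuclideanSpace ℝ (Fin N) | ⟪y, α⟫ = 0} := by
    intro u hu
    obtain ⟨α, hα, h0⟩ := hcon u (by simpa using hu)
    exact Set.mem_biUnion hα h0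
  have := measure_mono (μ := volume) hsubset
  rw [hz] at this
  exact absurd (le_antisymm this zero_le)
    (measure_ball_pos volume (0 : EuclideanSpace ℝ (Fin N)) one_pos).ne'

lemma exists_good_point (N : ℕ) (R : Finset (EuclideanSpace ℝ (Fin N)))
    (hR0 : (0 : EuclideanSpace ℝ (Fin N)) ∉ R)
    (hRnorm : ∀ α ∈ R, ‖α‖ = Real.sqrt 2) :
    ∃ ε : ℝ, 0 < ε ∧ ε ≤ 1/4 ∧ ∀ (x : EuclideanSpace ℝ (Fin N)) (r : ℝ), 0 < r →
      ∃ z : EuclideanSpace ℝ (Fin N), dist z x ≤ r/2 ∧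
        ∀ α ∈ R, ε * (|⟪x, α⟫| + r) ≤ |⟪z, α⟫| := by
  classical
  rcases R.eq_empty_or_nonempty with rfl | hne
  · exact ⟨1/4, by norm_num, le_refl _,
      fun x r hr => ⟨x, by rw [dist_self]; positivity, by simp⟩⟩
  obtain ⟨u, hu1, hu⟩ := exists_generic N R hR0
  set c₀ : ℝ := R.inf' hne fun α => |⟪u, α⟫| with hc₀def
  have hc₀ : 0 < c₀ := by
    rw [hc₀def, Finset.lt_inf'_iff]
    intro α hα
    exact abs_pos.2 (hu α hα)
  set ε : ℝ := min (1/4) (c₀ / (24 * R.card)) with hεdef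
  have hcardpos : (0:ℝ) < R.card := by exact_mod_cast hne.card_pos
  have hε0 : 0 < ε := lt_min (by norm_num) (by positivity)
  have hε4 : ε ≤ 1/4 := min_le_left _ _
  refine ⟨ε, hε0, hε4, fun x r hr => ?_⟩
  set bad : EuclideanSpace ℝ (Fin N) → Set ℝ := fun α =>
    {t : ℝ | |⟪x + (t*r) • u, α⟫| < ε * (|⟪x, α⟫| + r)} ∩ Set.Icc 0 (1/2)
    with hbaddef
  have hinner : ∀ (t : ℝ) (α : EuclideanSpace ℝ (Fin N)),
      ⟪x + (t*r) • u, α⟫ = ⟪x, α⟫ + (t*r) * ⟪u, α⟫ := by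
    intro t α; rw [inner_add_left, real_inner_smul_left]
  have hbad : ∀ α ∈ R, volume (bad α) ≤ ENNReal.ofReal (6 * ε / c₀) := by
    intro α hα
    have hc₀α : c₀ ≤ |⟪u, α⟫| := Finset.inf'_le _ hα
    have hnα : ‖α‖ = Real.sqrt 2 := hRnorm α hα
    have hα2 : ‖α‖ ≤ 2 := by
      rw [hnα]
      nlinarith [Real.sq_sqrt (by norm_num : (0:ℝ) ≤ 2), Real.sqrt_nonneg 2]
    rcases le_or_gt (2*r) |⟪x, α⟫| with hcase | hcase
    · have hempty : bad α = ∅ := by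
        ext t
        simp only [hbaddef, Set.mem_inter_iff, Set.mem_setOf_eq, Set.mem_Icc,
          Set.mem_empty_iff_false, iff_false, not_and, and_imp]
        intro hlt ht0 ht2
        rw [hinner] at hlt
        have hiu : |⟪u, α⟫| ≤ ‖u‖ * ‖α‖ := abs_real_inner_le_norm u α
        have h1 : |(t*r) * ⟪u, α⟫| ≤ r := by
          rw [abs_mul, abs_of_nonneg (by positivity : (0:ℝ) ≤ t*r)]
          have h2 : ‖u‖ * ‖α‖ ≤ 2 := by nlinarith [norm_nonneg u, norm_nonneg α]
          have h3 : |⟪u, α⟫| ≤ 2 := hiu.trans h2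
          calc t * r * |⟪u, α⟫| ≤ t * r * 2 :=
                mul_le_mul_of_nonneg_left h3 (by positivity)
            _ ≤ r := by nlinarith [mul_le_mul_of_nonneg_right ht2 hr.le]
        have h2 : |⟪x, α⟫| ≤ |⟪x, α⟫ + (t*r) * ⟪u, α⟫| + |(t*r) * ⟪u, α⟫| := by
          have := abs_add_le (⟪x, α⟫ + (t*r) * ⟪u, α⟫) (-((t*r) * ⟪u, α⟫))
          simpa using this
        nlinarith [abs_nonneg (⟪x, α⟫)]
      rw [hempty]
      simp only [measure_empty]
      exact zero_le
    · -- slab case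
      set b : ℝ := r * ⟪u, α⟫ with hbdef
      have hbabs : r * c₀ ≤ |b| := by
        rw [hbdef, abs_mul, abs_of_nonneg hr.le]
        exact mul_le_mul_of_nonneg_left hc₀α hr.le
      have hbpos : 0 < |b| := lt_of_lt_of_le (by positivity) hbabs
      have hb : b ≠ 0 := by simpa [abs_pos] using hbpos
      have hsub : bad α ⊆ ball (-(⟪x, α⟫)/b) (ε * (|⟪x, α⟫| + r) / |b|) := by
        rintro t ⟨hlt, -⟩
        simp only [Set.mem_setOf_eq] at hlt
        rw [mem_ball, Real.dist_eq]
        rw [hinner t α] at hlt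
        have heq : t - -(⟪x, α⟫)/b = (⟪x, α⟫ + (t*r) * ⟪u, α⟫)/b := by
          have htb : (t*r) * ⟪u, α⟫ = t * b := by rw [hbdef]; ring
          rw [htb, add_div, mul_div_cancel_right₀ t hb]
          ring
        rw [heq, abs_div]
        exact (div_lt_div_iff_of_pos_right hbpos).2 hlt
      have hvol := (measure_mono hsub).trans (le_of_eq (Real.volume_ball _ _))
      refine hvol.trans (ENNReal.ofReal_le_ofReal ?_)
      have hnum : 2 * (ε * (|⟪x, α⟫| + r) / |b|) = 2 * ε * (|⟪x, α⟫| + r) / |b| := by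
        ring
      rw [hnum]
      have h6 : 2 * ε * (|⟪x, α⟫| + r) ≤ 6 * ε * r := by
        nlinarith [abs_nonneg (⟪x, α⟫)]
      calc 2 * ε * (|⟪x, α⟫| + r) / |b| ≤ 6 * ε * r / (r * c₀) := by
            apply div_le_div₀ (by positivity) h6 (by positivity) hbabs
        _ = 6 * ε / c₀ := by field_simp
  have hWbad : volume (⋃ α ∈ R, bad α) ≤ ENNReal.ofReal (1/4) := by
    have hεle : ε ≤ c₀ / (24 * R.card) := min_le_right _ _
    calc volume (⋃ α ∈ R, bad α) ≤ ∑ α ∈ R, volume (bad α) :=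
          measure_biUnion_finset_le R bad
      _ ≤ R.card • ENNReal.ofReal (6 * ε / c₀) := Finset.sum_le_card_nsmul R _ _ hbad
      _ = (R.card : ℝ≥0∞) * ENNReal.ofReal (6 * ε / c₀) := by
          rw [nsmul_eq_mul]
      _ ≤ ENNReal.ofReal (1/4) := by
          rw [← ENNReal.ofReal_natCast, ← ENNReal.ofReal_mul (by positivity)]
          apply ENNReal.ofReal_le_ofReal
          have h1 : 6 * ε / c₀ ≤ 1 / (4 * R.card) := by
            rw [div_le_div_iff₀ hc₀ (by positivity)]
            rw [le_div_iff₀ (by positivity)] at hεle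
            nlinarith
          calc (R.card : ℝ) * (6 * ε / c₀) ≤ R.card * (1 / (4 * R.card)) :=
                mul_le_mul_of_nonneg_left h1 (by positivity)
            _ = 1/4 := by field_simp
  have hnotsub : ¬ Set.Icc (0:ℝ) (1/2) ⊆ ⋃ α ∈ R, bad α := by
    intro h
    have h2 := (measure_mono (μ := volume) h).trans hWbad
    rw [Real.volume_Icc] at h2
    rw [ENNReal.ofReal_le_ofReal_iff (by norm_num)] at h2
    norm_num at h2
  obtain ⟨t, htI, htn⟩ := Set.not_subset.1 hnotsub
  obtain ⟨ht0, ht2⟩ := htI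
  refine ⟨x + (t*r) • u, ?_, ?_⟩
  · have : x + (t*r) • u - x = (t*r) • u := by abel
    rw [dist_eq_norm, this, norm_smul, Real.norm_eq_abs,
      abs_of_nonneg (by positivity : (0:ℝ) ≤ t*r)]
    nlinarith [norm_nonneg u, mul_le_mul_of_nonneg_left hu1.le (mul_nonneg ht0 hr.le),
      mul_le_mul_of_nonneg_right ht2 hr.le]
  · intro α hα
    by_contra hlt
    push_neg at hlt
    exact htn (Set.mem_biUnion hα ⟨hlt, ht0, ht2⟩)

set_option maxHeartbeats 1600000 in
/-- Two-sided estimate: `w(B(x,r)) ≈ r^N ∏_{α ∈ R} (|⟪x,α⟫| + r)^{k α}`. -/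
theorem dunkl_ball_volume_asymp (N : ℕ) (R : Finset (EuclideanSpace ℝ (Fin N)))
    (hR0 : (0 : EuclideanSpace ℝ (Fin N)) ∉ R)
    (hRnorm : ∀ α ∈ R, ‖α‖ = Real.sqrt 2)
    (k : EuclideanSpace ℝ (Fin N) → ℝ) (hk : ∀ α, 0 ≤ k α)
    (w : Measure (EuclideanSpace ℝ (Fin N)))
    (hw : w = volume.withDensity
      (fun x => ENNReal.ofReal (∏ α ∈ R, |⟪x, α⟫| ^ (k α)))) :
    ∃ C : ℝ, 0 < C ∧ ∀ (x : EuclideanSpace ℝ (Fin N)) (r : ℝ), 0 < r →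
      C⁻¹ * (w (ball x r)).toReal ≤
        r ^ (N : ℕ) * ∏ α ∈ R, (|⟪x, α⟫| + r) ^ (k α) ∧
      r ^ (N : ℕ) * ∏ α ∈ R, (|⟪x, α⟫| + r) ^ (k α) ≤ C * (w (ball x r)).toReal := by
  obtain ⟨ε, hε0, hε4, hgood⟩ := exists_good_point N R hR0 hRnorm
  have hα2 : ∀ α ∈ R, ‖α‖ ≤ 2 := by
    intro α hα
    rw [hRnorm α hα]
    nlinarith [Real.sq_sqrt (by norm_num : (0:ℝ) ≤ 2), Real.sqrt_nonneg 2]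
  set V : ℝ≥0∞ := volume (ball (0 : EuclideanSpace ℝ (Fin N)) 1) with hV
  have hV0 : V ≠ 0 := (measure_ball_pos volume _ one_pos).ne'
  have hVtop : V ≠ ⊤ := measure_ball_lt_top.ne
  have hVR : 0 < V.toReal := ENNReal.toReal_pos hV0 hVtop
  set K₂ : ℝ := ∏ α ∈ R, (2:ℝ) ^ (k α) with hK₂
  set K₁ : ℝ := ∏ α ∈ R, (ε/2) ^ (k α) with hK₁
  have hK₂0 : 0 < K₂ := Finset.prod_pos fun α _ => Real.rpow_pos_of_pos two_pos _
  have hK₁0 : 0 < K₁ :=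
    Finset.prod_pos fun α _ => Real.rpow_pos_of_pos (by linarith) _
  set δ : ℝ := ε/4 with hδdef
  have hδ0 : 0 < δ := by rw [hδdef]; linarith
  set B : ℝ := K₁ * δ^N * V.toReal with hBdef
  have hB0 : 0 < B := by positivity
  set C : ℝ := max (K₂ * V.toReal) B⁻¹ + 1 with hCdef
  have hC0 : 0 < C := by positivity
  refine ⟨C, hC0, fun x r hr => ?_⟩
  set P : ℝ := ∏ α ∈ R, (|⟪x, α⟫| + r) ^ (k α) with hP
  have hP0 : 0 < P := by
    refine Finset.prod_pos fun α hα => Real.rpow_pos_of_pos ?_ _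
    have := abs_nonneg (⟪x, α⟫); linarith
  have hwb : ∀ (c : EuclideanSpace ℝ (Fin N)) (s : ℝ), w (ball c s) =
      ∫⁻ y in ball c s, ENNReal.ofReal (∏ α ∈ R, |⟪y, α⟫| ^ (k α)) ∂volume := by
    intro c s; rw [hw, withDensity_apply _ measurableSet_ball]
  have hfrk : Module.finrank ℝ (EuclideanSpace ℝ (Fin N)) = N :=
    finrank_euclideanSpace_fin
  -- upper bound
  have hupper : w (ball x r) ≤ ENNReal.ofReal (K₂ * P) * (ENNReal.ofReal (r ^ N) * V) := by
    rw [hwb]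
    calc ∫⁻ y in ball x r, ENNReal.ofReal (∏ α ∈ R, |⟪y, α⟫| ^ (k α)) ∂volume
        ≤ ∫⁻ _y in ball x r, ENNReal.ofReal (K₂ * P) ∂volume := by
          refine setLIntegral_mono measurable_const fun y hy => ?_
          apply ENNReal.ofReal_le_ofReal
          rw [hK₂, hP, ← Finset.prod_mul_distrib]
          refine Finset.prod_le_prod (fun α _ => Real.rpow_nonneg (abs_nonneg _) _)
            (fun α hα => ?_)
          rw [← Real.mul_rpow (by norm_num)
            (by have := abs_nonneg (⟪x, α⟫); linarith)]
          refine Real.rpow_le_rpow (abs_nonneg _) ?_ (hk α)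
          have h1 : |⟪y, α⟫| ≤ |⟪x, α⟫| + |⟪y - x, α⟫| := by
            have := abs_add_le (⟪x, α⟫) (⟪y - x, α⟫)
            rw [← inner_add_left, add_sub_cancel] at this
            exact this
          have h2 : |⟪y - x, α⟫| ≤ ‖y - x‖ * ‖α‖ := abs_real_inner_le_norm _ _
          have h3 : ‖y - x‖ < r := by rw [← dist_eq_norm]; exact mem_ball.1 hy
          have h4 : ‖y - x‖ * ‖α‖ ≤ 2 * r := by
            nlinarith [norm_nonneg (y - x), norm_nonneg α, hα2 α hα]
          nlinarith [abs_nonneg (⟪x, α⟫)]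
      _ = ENNReal.ofReal (K₂ * P) * volume (ball x r) := setLIntegral_const _ _
      _ = ENNReal.ofReal (K₂ * P) * (ENNReal.ofReal (r ^ N) * V) := by
          rw [Measure.addHaar_ball_of_pos volume x hr, hfrk]
  have hfin : w (ball x r) ≠ ⊤ :=
    (lt_of_le_of_lt hupper (ENNReal.mul_lt_top ENNReal.ofReal_lt_top
      (ENNReal.mul_lt_top ENNReal.ofReal_lt_top hVtop.lt_top))).ne
  -- lower bound
  obtain ⟨z, hzx, hzα⟩ := hgood x r hr
  have hsubball : ball z (δ*r) ⊆ ball x r := by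
    intro y hy
    rw [mem_ball] at hy ⊢
    have := dist_triangle y z x
    have hδ16 : δ ≤ 1/16 := by rw [hδdef]; linarith
    nlinarith
  have hlower : ENNReal.ofReal (K₁ * P) * (ENNReal.ofReal ((δ*r) ^ N) * V)
      ≤ w (ball x r) := by
    calc ENNReal.ofReal (K₁ * P) * (ENNReal.ofReal ((δ*r) ^ N) * V)
        = ENNReal.ofReal (K₁ * P) * volume (ball z (δ*r)) := by
          rw [Measure.addHaar_ball_of_pos volume z (by positivity : (0:ℝ) < δ*r), hfrk]
      _ = ∫⁻ _y in ball z (δ*r), ENNReal.ofReal (K₁ * P) ∂volume :=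
          (setLIntegral_const _ _).symm
      _ ≤ ∫⁻ y in ball z (δ*r), ENNReal.ofReal (∏ α ∈ R, |⟪y, α⟫| ^ (k α)) ∂volume := by
          refine setLIntegral_mono (dunkl_meas N R k hk) fun y hy => ?_
          apply ENNReal.ofReal_le_ofReal
          rw [hK₁, hP, ← Finset.prod_mul_distrib]
          refine Finset.prod_le_prod (fun α _ => mul_nonneg
            (Real.rpow_nonneg (by linarith) _)
            (Real.rpow_nonneg (by have := abs_nonneg (⟪x, α⟫); linarith) _))
            (fun α hα => ?_)
          rw [← Real.mul_rpow (by linarith)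
            (by have := abs_nonneg (⟪x, α⟫); linarith)]
          refine Real.rpow_le_rpow
            (by have := abs_nonneg (⟪x, α⟫); nlinarith) ?_ (hk α)
          have h1 : |⟪z, α⟫| ≤ |⟪y, α⟫| + |⟪z - y, α⟫| := by
            have := abs_add_le (⟪y, α⟫) (⟪z - y, α⟫)
            rw [← inner_add_left, add_sub_cancel] at this
            exact this
          have h2 : |⟪z - y, α⟫| ≤ ‖z - y‖ * ‖α‖ := abs_real_inner_le_norm _ _
          have h3 : ‖z - y‖ < δ*r := by
            rw [← dist_eq_norm, dist_comm]; exact mem_ball.1 hy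
          have h4 : ‖z - y‖ * ‖α‖ ≤ 2 * (δ*r) := by
            nlinarith [norm_nonneg (z - y), norm_nonneg α, hα2 α hα]
          have h5 : ε * (|⟪x, α⟫| + r) ≤ |⟪z, α⟫| := hzα α hα
          have h6 : 2 * (δ*r) = (ε/2) * r := by rw [hδdef]; ring
          nlinarith [abs_nonneg (⟪x, α⟫)]
      _ = w (ball z (δ*r)) := (hwb z (δ*r)).symm
      _ ≤ w (ball x r) := measure_mono hsubball
  -- pass to real numbers
  have hUr : (w (ball x r)).toReal ≤ (K₂ * V.toReal) * (r ^ N * P) := by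
    have h := ENNReal.toReal_mono (ENNReal.mul_ne_top ENNReal.ofReal_ne_top
      (ENNReal.mul_ne_top ENNReal.ofReal_ne_top hVtop)) hupper
    rw [ENNReal.toReal_mul, ENNReal.toReal_mul,
      ENNReal.toReal_ofReal (by positivity : (0:ℝ) ≤ K₂ * P),
      ENNReal.toReal_ofReal (by positivity : (0:ℝ) ≤ r ^ N)] at h
    calc (w (ball x r)).toReal ≤ K₂ * P * (r ^ N * V.toReal) := h
      _ = (K₂ * V.toReal) * (r ^ N * P) := by ring
  have hLr : B * (r ^ N * P) ≤ (w (ball x r)).toReal := by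
    have h := ENNReal.toReal_mono hfin hlower
    rw [ENNReal.toReal_mul, ENNReal.toReal_mul,
      ENNReal.toReal_ofReal (by positivity : (0:ℝ) ≤ K₁ * P),
      ENNReal.toReal_ofReal (by positivity : (0:ℝ) ≤ (δ*r) ^ N)] at h
    calc B * (r ^ N * P) = K₁ * P * ((δ*r) ^ N * V.toReal) := by
          rw [hBdef, mul_pow]; ring
      _ ≤ (w (ball x r)).toReal := h
  have hrP0 : 0 < r ^ N * P := by positivity
  have hW0 : 0 ≤ (w (ball x r)).toReal := ENNReal.toReal_nonneg
  constructor
  · rw [inv_mul_le_iff₀ hC0]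
    calc (w (ball x r)).toReal ≤ (K₂ * V.toReal) * (r ^ N * P) := hUr
      _ ≤ C * (r ^ N * P) := by
          apply mul_le_mul_of_nonneg_right _ hrP0.le
          rw [hCdef]
          have := le_max_left (K₂ * V.toReal) B⁻¹
          linarith
  · have h1 : r ^ N * P ≤ B⁻¹ * (w (ball x r)).toReal := by
      rw [le_inv_mul_iff₀ hB0]
      exact hLr
    calc r ^ N * P ≤ B⁻¹ * (w (ball x r)).toReal := h1
      _ ≤ C * (w (ball x r)).toReal := by
          apply mul_le_mul_of_nonneg_right _ hW0
          rw [hCdef]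
          have := le_max_right (K₂ * V.toReal) B⁻¹
          linarith
end

section
/- There exists a constant C ≥ 1 such that for every x ∈ ℝ^N and all 0 < r₁ ≤ r₂: C⁻¹ (r₂/r₁)^N ≤ w(B(x,r₂))/w(B(x,r₁)) ≤ C (r₂/r₁)^𝐍, where 𝐍 = N + Σ_{α∈R} k(α). -/
open scoped RealInnerProductSpace
open MeasureTheory Metric


lemma aux_exists_pos_le {ι : Type*} [DecidableEq ι] (S : Finset ι) (f : ι → ℝ)
    (hf : ∀ a ∈ S, 0 < f a) : ∃ δ : ℝ, 0 < δ ∧ δ ≤ 1 ∧ ∀ a ∈ S, δ ≤ f a := by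
  induction S using Finset.induction_on with
  | empty => exact ⟨1, one_pos, le_refl 1, by simp⟩
  | insert a s hnot ih =>
    obtain ⟨δ, hδ0, hδ1, hδ⟩ := ih (fun b hb => hf b (Finset.mem_insert_of_mem hb))
    refine ⟨min δ (f a), lt_min hδ0 (hf a (Finset.mem_insert_self a s)),
      le_trans (min_le_left _ _) hδ1, ?_⟩
    intro b hb
    rcases Finset.mem_insert.1 hb with rfl | hb
    · exact min_le_right _ _
    · exact le_trans (min_le_left _ _) (hδ b hb)

lemma aux_unit_vector {N : ℕ} (R : Finset (EuclideanSpace ℝ (Fin N)))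
    (hR0 : (0 : EuclideanSpace ℝ (Fin N)) ∉ R) (hNe : R.Nonempty) :
    ∃ u : EuclideanSpace ℝ (Fin N), ‖u‖ = 1 ∧ ∀ α ∈ R, ⟪u, α⟫ ≠ 0 := by
  obtain ⟨α₀, hα₀⟩ := hNe
  have hα₀ne : α₀ ≠ 0 := fun h => hR0 (h ▸ hα₀)
  haveI : Nontrivial (EuclideanSpace ℝ (Fin N)) := nontrivial_of_ne α₀ 0 hα₀ne
  -- the union of hyperplanes has measure zero
  have hzero : volume (⋃ α ∈ R, {y : EuclideanSpace ℝ (Fin N) | ⟪y, α⟫ = 0}) = 0 := by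
    refine measure_biUnion_null_iff R.countable_toSet |>.2 ?_
    intro α hα
    have hαne : α ≠ 0 := fun h => hR0 (h ▸ hα)
    have : {y : EuclideanSpace ℝ (Fin N) | ⟪y, α⟫ = 0}
        = (LinearMap.ker ((innerSL ℝ α).toLinearMap) : Set (EuclideanSpace ℝ (Fin N))) := by
      ext y
      simp only [Set.mem_setOf_eq, SetLike.mem_coe, LinearMap.mem_ker,
        ContinuousLinearMap.coe_coe, innerSL_apply_apply]
      rw [real_inner_comm]
    rw [this]
    refine Measure.addHaar_submodule _ _ ?_
    intro h
    have : α ∈ LinearMap.ker ((innerSL ℝ α).toLinearMap) := h ▸ Submodule.mem_top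
    simp only [LinearMap.mem_ker, ContinuousLinearMap.coe_coe, innerSL_apply_apply] at this
    exact hαne (inner_self_eq_zero.1 this)
  have hpos : 0 < volume (ball (0 : EuclideanSpace ℝ (Fin N)) 1) :=
    measure_ball_pos _ _ one_pos
  have : (ball (0 : EuclideanSpace ℝ (Fin N)) 1
      \ ⋃ α ∈ R, {y : EuclideanSpace ℝ (Fin N) | ⟪y, α⟫ = 0}).Nonempty := by
    rw [Set.nonempty_iff_ne_empty]
    intro h
    have := measure_diff_null hzero (s := ball (0 : EuclideanSpace ℝ (Fin N)) 1)
    rw [h, measure_empty] at this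
    exact absurd this.symm hpos.ne'
  obtain ⟨v, hv1, hv2⟩ := this
  have hvne : v ≠ 0 := by
    intro h
    apply hv2
    subst h
    exact Set.mem_biUnion hα₀ (by simp)
  refine ⟨‖v‖⁻¹ • v, ?_, ?_⟩
  · rw [norm_smul, norm_inv, norm_norm, inv_mul_cancel₀ (norm_ne_zero_iff.2 hvne)]
  · intro α hα
    rw [real_inner_smul_left]
    refine mul_ne_zero (inv_ne_zero (norm_ne_zero_iff.2 hvne)) ?_
    intro h
    exact hv2 (Set.mem_biUnion hα h)


lemma aux_interval_ball {a c s : ℝ} (hc : c ≠ 0) :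
    {t : ℝ | |a + t * c| < s} = ball (-(a/c)) (s/|c|) := by
  ext t
  simp only [Set.mem_setOf_eq, mem_ball, Real.dist_eq, sub_neg_eq_add]
  rw [lt_div_iff₀ (abs_pos.2 hc), ← abs_mul]
  have h : (t + a/c) * c = a + t * c := by field_simp; ring
  rw [h]

lemma aux_good_t {N : ℕ} (R : Finset (EuclideanSpace ℝ (Fin N)))
    (x u : EuclideanSpace ℝ (Fin N)) (δ r ε : ℝ) (hδ0 : 0 < δ)
    (hδu : ∀ α ∈ R, δ ≤ |⟪u, α⟫|)
    (hε : ε = δ / (32 * (R.card + 1))) (hr : 0 < r) :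
    ∃ t, t ∈ Set.Icc (r/4) (r/2) ∧ ∀ α ∈ R, 2*ε*r ≤ |⟪x + t • u, α⟫| := by
  have hε0 : 0 < ε := by
    rw [hε]; positivity
  -- bad sets are balls in ℝ
  have hinner : ∀ (t : ℝ) α, ⟪x + t • u, α⟫ = ⟪x, α⟫ + t * ⟪u, α⟫ := by
    intro t α
    rw [inner_add_left, real_inner_smul_left]
  have hc : ∀ α ∈ R, ⟪u, α⟫ ≠ 0 := by
    intro α hα
    have := hδu α hα
    intro h; rw [h, abs_zero] at this; linarith
  have hTball : ∀ α ∈ R, {t : ℝ | |⟪x, α⟫ + t * ⟪u, α⟫| < 2*ε*r}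
      = ball (-(⟪x, α⟫/⟪u, α⟫)) (2*ε*r/|⟪u, α⟫|) := by
    intro α hα
    exact aux_interval_ball (hc α hα)
  -- measure of each bad set
  have hvol : ∀ α ∈ R, volume {t : ℝ | |⟪x, α⟫ + t * ⟪u, α⟫| < 2*ε*r}
      ≤ ENNReal.ofReal (4*ε*r/δ) := by
    intro α hα
    rw [hTball α hα, Real.volume_ball]
    apply ENNReal.ofReal_le_ofReal
    have h4 : 2*(2*ε*r/|⟪u, α⟫|) = 4*ε*r/|⟪u, α⟫| := by ring
    rw [h4, div_le_div_iff₀ (abs_pos.2 (hc α hα)) hδ0]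
    exact mul_le_mul_of_nonneg_left (hδu α hα) (by positivity)
  -- good set nonempty
  have hsub : ¬ (Set.Icc (r/4) (r/2) ⊆ ⋃ α ∈ R, {t : ℝ | |⟪x, α⟫ + t * ⟪u, α⟫| < 2*ε*r}) := by
    intro hsub
    have h1 : volume (Set.Icc (r/4) (r/2)) ≤ ∑ α ∈ R, ENNReal.ofReal (4*ε*r/δ) := by
      refine le_trans (measure_mono hsub) (le_trans (measure_biUnion_finset_le _ _) ?_)
      exact Finset.sum_le_sum hvol
    rw [Real.volume_Icc, Finset.sum_const, nsmul_eq_mul,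
      ← ENNReal.ofReal_natCast, ← ENNReal.ofReal_mul (by positivity)] at h1
    rw [ENNReal.ofReal_le_ofReal_iff (by positivity)] at h1
    have hcard : (0:ℝ) ≤ (R.card : ℝ) := Nat.cast_nonneg _
    rw [hε] at h1
    have h32 : (32 : ℝ) * ((R.card : ℝ) + 1) ≠ 0 := by positivity
    field_simp at h1
    nlinarith [mul_pos hr hδ0, mul_nonneg hcard (le_of_lt (mul_pos hr hδ0))]
  obtain ⟨t, ht, htn⟩ := Set.not_subset.1 hsub
  refine ⟨t, ht, ?_⟩
  intro α hα
  rw [hinner]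
  by_contra hlt
  push_neg at hlt
  exact htn (Set.mem_biUnion hα hlt)


lemma aux_volume_ball {N : ℕ} (x : EuclideanSpace ℝ (Fin N)) {r : ℝ} (hr : 0 < r) :
    volume (ball x r) = ENNReal.ofReal (r ^ N)
      * volume (ball (0 : EuclideanSpace ℝ (Fin N)) 1) := by
  rcases Nat.eq_zero_or_pos N with h | h
  · subst h
    have hball : ∀ (z : EuclideanSpace ℝ (Fin 0)) (s : ℝ), 0 < s → ball z s = Set.univ := by
      intro z s hs
      ext y
      simp only [mem_ball, Set.mem_univ, iff_true]
      rw [Subsingleton.elim y z, dist_self]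
      exact hs
    rw [hball x r hr, hball 0 1 one_pos, pow_zero, ENNReal.ofReal_one, one_mul]
  · haveI : Nontrivial (EuclideanSpace ℝ (Fin N)) := by
      apply Module.nontrivial_of_finrank_pos (R := ℝ)
      rw [finrank_euclideanSpace_fin]
      exact h
    rw [Measure.addHaar_ball _ _ hr.le, finrank_euclideanSpace_fin]

lemma aux_sqrt2 : (1:ℝ) ≤ Real.sqrt 2 ∧ Real.sqrt 2 ≤ 3/2 := by
  constructor
  · nlinarith [Real.sq_sqrt (by norm_num : (0:ℝ) ≤ 2), Real.sqrt_nonneg 2]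
  · nlinarith [Real.sq_sqrt (by norm_num : (0:ℝ) ≤ 2), Real.sqrt_nonneg 2]

set_option maxHeartbeats 2000000 in
lemma aux_core {N : ℕ} (R : Finset (EuclideanSpace ℝ (Fin N)))
    (hR0 : (0 : EuclideanSpace ℝ (Fin N)) ∉ R)
    (hRnorm : ∀ α ∈ R, ‖α‖ = Real.sqrt 2)
    (k : EuclideanSpace ℝ (Fin N) → ℝ) (hk : ∀ α, 0 ≤ k α) :
    ∃ c₁ c₂ : ℝ, 0 < c₁ ∧ 0 < c₂ ∧ ∀ (x : EuclideanSpace ℝ (Fin N)) (r : ℝ), 0 < r →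
      ENNReal.ofReal (c₁ * (r ^ N * ∏ α ∈ R, (max |⟪x, α⟫| r) ^ (k α)))
        ≤ (volume.withDensity (fun y => ENNReal.ofReal (∏ α ∈ R, |⟪y, α⟫| ^ (k α))))
            (ball x r)
      ∧ (volume.withDensity (fun y => ENNReal.ofReal (∏ α ∈ R, |⟪y, α⟫| ^ (k α))))
            (ball x r)
        ≤ ENNReal.ofReal (c₂ * (r ^ N * ∏ α ∈ R, (max |⟪x, α⟫| r) ^ (k α))) := by
  classical
  set V : ENNReal := volume (ball (0 : EuclideanSpace ℝ (Fin N)) 1) with hVdef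
  have hV0 : 0 < V := measure_ball_pos _ _ one_pos
  have hVtop : V ≠ ⊤ := measure_ball_lt_top.ne
  have hVR : 0 < V.toReal := ENNReal.toReal_pos hV0.ne' hVtop
  have hVeq : V = ENNReal.ofReal V.toReal := (ENNReal.ofReal_toReal hVtop).symm
  -- N = 0 case
  rcases Nat.eq_zero_or_pos N with hN | hN
  · subst hN
    have hRe : R = ∅ := by
      rw [Finset.eq_empty_iff_forall_notMem]
      intro α hα
      exact hR0 (by rwa [Subsingleton.elim (0 : EuclideanSpace ℝ (Fin 0)) α])
    subst hRe
    refine ⟨V.toReal, V.toReal, hVR, hVR, ?_⟩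
    intro x r hr
    have hwb : (volume.withDensity (fun y : EuclideanSpace ℝ (Fin 0) =>
        ENNReal.ofReal (∏ α ∈ (∅ : Finset (EuclideanSpace ℝ (Fin 0))), |⟪y, α⟫| ^ (k α))))
        (ball x r) = V := by
      simp only [Finset.prod_empty, ENNReal.ofReal_one]
      have h1 : (volume.withDensity fun _ : EuclideanSpace ℝ (Fin 0) => (1:ENNReal)) = volume :=
        withDensity_one
      rw [h1, aux_volume_ball x hr]
      simp
      exact hVdef.symm
    rw [hwb]
    simp only [Finset.prod_empty, pow_zero, mul_one, one_mul]
    exact ⟨le_of_eq hVeq.symm, le_of_eq hVeq⟩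
  -- main case N ≥ 1
  have hmeas : Measurable (fun y : EuclideanSpace ℝ (Fin N) =>
      ENNReal.ofReal (∏ α ∈ R, |⟪y, α⟫| ^ (k α))) := by
    apply Measurable.ennreal_ofReal
    apply Continuous.measurable
    apply continuous_finset_prod
    intro α _
    exact (Real.continuous_rpow_const (hk α)).comp
      (continuous_abs.comp ((continuous_id.inner continuous_const)))
  have hwball : ∀ (x : EuclideanSpace ℝ (Fin N)) (r : ℝ),
      (volume.withDensity (fun y => ENNReal.ofReal (∏ α ∈ R, |⟪y, α⟫| ^ (k α)))) (ball x r)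
      = ∫⁻ y in ball x r, ENNReal.ofReal (∏ α ∈ R, |⟪y, α⟫| ^ (k α)) := by
    intro x r
    rw [withDensity_apply _ measurableSet_ball]
  have hprod_nonneg : ∀ y : EuclideanSpace ℝ (Fin N),
      0 ≤ ∏ α ∈ R, |⟪y, α⟫| ^ (k α) :=
    fun y => Finset.prod_nonneg fun α _ => Real.rpow_nonneg (abs_nonneg _) _
  -- a unit vector avoiding all hyperplanes
  obtain ⟨u, hu1, hu2⟩ : ∃ u : EuclideanSpace ℝ (Fin N), ‖u‖ = 1 ∧ ∀ α ∈ R, ⟪u, α⟫ ≠ 0 := by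
    rcases R.eq_empty_or_nonempty with rfl | hne
    · haveI : Nontrivial (EuclideanSpace ℝ (Fin N)) := by
        apply Module.nontrivial_of_finrank_pos (R := ℝ)
        rw [finrank_euclideanSpace_fin]; exact hN
      obtain ⟨u, hu⟩ := exists_norm_eq (EuclideanSpace ℝ (Fin N)) (zero_le_one)
      exact ⟨u, hu, by simp⟩
    · exact aux_unit_vector R hR0 hne
  obtain ⟨δ, hδ0, hδ1, hδle⟩ := aux_exists_pos_le R (fun α => |⟪u, α⟫|)
    (fun α hα => abs_pos.2 (hu2 α hα))
  set ε : ℝ := δ / (32 * (R.card + 1)) with hεdef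
  have hε0 : 0 < ε := by
    rw [hεdef]; apply div_pos hδ0
    have := Nat.cast_nonneg (α := ℝ) R.card; linarith
  have hε1 : ε ≤ 1 := by
    rw [hεdef, div_le_one (by have := Nat.cast_nonneg (α := ℝ) R.card; linarith)]
    have : (0:ℝ) ≤ (R.card : ℝ) := Nat.cast_nonneg _
    nlinarith
  clear_value ε
  refine ⟨(∏ α ∈ R, (ε/4) ^ (k α)) * ((ε/2) ^ N * V.toReal),
    (∏ α ∈ R, (2 * Real.sqrt 2) ^ (k α)) * V.toReal, ?_, ?_, ?_⟩
  · have h1 : 0 < ∏ α ∈ R, (ε/4) ^ (k α) :=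
      Finset.prod_pos fun α _ => Real.rpow_pos_of_pos (by positivity) _
    positivity
  · have h1 : 0 < ∏ α ∈ R, (2 * Real.sqrt 2) ^ (k α) :=
      Finset.prod_pos fun α _ => Real.rpow_pos_of_pos (by
        nlinarith [aux_sqrt2.1]) _
    positivity
  intro x r hr
  set A : EuclideanSpace ℝ (Fin N) → ℝ := fun α => max |⟪x, α⟫| r with hAdef
  have hA0 : ∀ α, 0 < A α := fun α => lt_of_lt_of_le hr (le_max_right _ _)
  have hs2 := aux_sqrt2
  constructor
  · -- LOWER BOUND
    obtain ⟨t, ht, htα⟩ := aux_good_t R x u δ r ε hδ0 hδle hεdef hr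
    set z : EuclideanSpace ℝ (Fin N) := x + t • u with hzdef
    set ρ : ℝ := ε * r / 2 with hρdef
    have hρ0 : 0 < ρ := by rw [hρdef]; positivity
    have hzx : dist z x ≤ r / 2 := by
      rw [hzdef, dist_eq_norm, add_sub_cancel_left, norm_smul, hu1, mul_one,
        Real.norm_eq_abs, abs_of_nonneg (le_trans (by linarith [ht.1, hr]) ht.1)]
      exact ht.2
    have hsub : ball z ρ ⊆ ball x r := by
      apply ball_subset_ball'
      have : ρ ≤ r / 2 := by rw [hρdef]; nlinarith
      linarith
    -- pointwise lower bound on the small ball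
    have hpt : ∀ y ∈ ball z ρ, ∀ α ∈ R, (ε/4) * A α ≤ |⟪y, α⟫| := by
      intro y hy α hα
      have hyz : ‖z - y‖ < ρ := by
        rw [← dist_eq_norm, dist_comm]
        exact mem_ball.1 hy
      have hyx : ‖x - y‖ < r := by
        rw [← dist_eq_norm, dist_comm]
        exact mem_ball.1 (hsub hy)
      have e1 : |⟪z, α⟫| - |⟪y, α⟫| ≤ |⟪z - y, α⟫| := by
        rw [inner_sub_left]
        exact abs_sub_abs_le_abs_sub _ _
      have e2 : |⟪z - y, α⟫| ≤ ‖z - y‖ * Real.sqrt 2 := by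
        have := abs_real_inner_le_norm (z - y) α
        rwa [hRnorm α hα] at this
      have e3 : |⟪x, α⟫| - |⟪y, α⟫| ≤ |⟪x - y, α⟫| := by
        rw [inner_sub_left]
        exact abs_sub_abs_le_abs_sub _ _
      have e4 : |⟪x - y, α⟫| ≤ ‖x - y‖ * Real.sqrt 2 := by
        have := abs_real_inner_le_norm (x - y) α
        rwa [hRnorm α hα] at this
      have e5 : 2 * ε * r ≤ |⟪z, α⟫| := htα α hα
      -- |⟪y,α⟫| ≥ ε r  and  |⟪y,α⟫| ≥ |⟪x,α⟫| - (3/2) r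
      have f1 : ε * r ≤ |⟪y, α⟫| := by
        have : ‖z - y‖ * Real.sqrt 2 ≤ ρ * (3/2) := by
          nlinarith [Real.sqrt_nonneg 2, hρ0]
        rw [hρdef] at this
        nlinarith
      have f2 : |⟪x, α⟫| - (3/2) * r ≤ |⟪y, α⟫| := by
        have : ‖x - y‖ * Real.sqrt 2 ≤ r * (3/2) := by
          nlinarith [Real.sqrt_nonneg 2, hr]
        nlinarith
      rcases le_or_gt |⟪x, α⟫| (2*r) with hc | hc
      · have hAle : A α ≤ 2*r := max_le hc (by linarith)
        nlinarith [hε0.le, hA0 α]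
      · have hAeq : A α = |⟪x, α⟫| := max_eq_left (by linarith)
        rw [hAeq]
        nlinarith [abs_nonneg ⟪x, α⟫]
    have hptprod : ∀ y ∈ ball z ρ,
        (∏ α ∈ R, ((ε/4) * A α) ^ (k α)) ≤ ∏ α ∈ R, |⟪y, α⟫| ^ (k α) := by
      intro y hy
      apply Finset.prod_le_prod
      · intro α _
        exact Real.rpow_nonneg (by positivity) _
      · intro α hα
        exact Real.rpow_le_rpow (by positivity) (hpt y hy α hα) (hk α)
    calc ENNReal.ofReal (((∏ α ∈ R, (ε/4) ^ (k α)) * ((ε/2) ^ N * V.toReal))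
          * (r ^ N * ∏ α ∈ R, A α ^ (k α)))
        = ENNReal.ofReal ((∏ α ∈ R, ((ε/4) * A α) ^ (k α)) * (ρ ^ N * V.toReal)) := by
          congr 1
          have h1 : ∏ α ∈ R, ((ε/4) * A α) ^ (k α)
              = (∏ α ∈ R, (ε/4) ^ (k α)) * ∏ α ∈ R, A α ^ (k α) := by
            rw [← Finset.prod_mul_distrib]
            exact Finset.prod_congr rfl fun α _ =>
              Real.mul_rpow (by positivity) (hA0 α).le
          have h2 : ρ ^ N = (ε/2) ^ N * r ^ N := by
            rw [hρdef, ← mul_pow]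
            congr 1
            ring
          rw [h1, h2]
          ring
      _ = ENNReal.ofReal (∏ α ∈ R, ((ε/4) * A α) ^ (k α))
            * (ENNReal.ofReal (ρ ^ N) * V) := by
          rw [ENNReal.ofReal_mul
              (Finset.prod_nonneg fun α _ => Real.rpow_nonneg (by positivity) _),
            ENNReal.ofReal_mul (by positivity : (0:ℝ) ≤ ρ ^ N), ← hVeq]
      _ = ENNReal.ofReal (∏ α ∈ R, ((ε/4) * A α) ^ (k α)) * volume (ball z ρ) := by
          rw [aux_volume_ball z hρ0]
      _ = ∫⁻ _ in ball z ρ, ENNReal.ofReal (∏ α ∈ R, ((ε/4) * A α) ^ (k α)) := by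
          rw [setLIntegral_const]
      _ ≤ ∫⁻ y in ball z ρ, ENNReal.ofReal (∏ α ∈ R, |⟪y, α⟫| ^ (k α)) := by
          exact setLIntegral_mono hmeas fun y hy => ENNReal.ofReal_le_ofReal (hptprod y hy)
      _ ≤ ∫⁻ y in ball x r, ENNReal.ofReal (∏ α ∈ R, |⟪y, α⟫| ^ (k α)) :=
          lintegral_mono_set hsub
      _ = _ := (hwball x r).symm
  · -- UPPER BOUND
    have hpt : ∀ y ∈ ball x r, ∀ α ∈ R, |⟪y, α⟫| ≤ 2 * Real.sqrt 2 * A α := by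
      intro y hy α hα
      have hyx : ‖y - x‖ < r := by rw [← dist_eq_norm]; exact mem_ball.1 hy
      have e1 : |⟪y, α⟫| - |⟪x, α⟫| ≤ |⟪y - x, α⟫| := by
        rw [inner_sub_left]
        exact abs_sub_abs_le_abs_sub _ _
      have e2 : |⟪y - x, α⟫| ≤ ‖y - x‖ * Real.sqrt 2 := by
        have := abs_real_inner_le_norm (y - x) α
        rwa [hRnorm α hα] at this
      have p1 : ‖y - x‖ * Real.sqrt 2 ≤ r * Real.sqrt 2 :=
        mul_le_mul_of_nonneg_right hyx.le (Real.sqrt_nonneg 2)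
      have p2 : r * Real.sqrt 2 ≤ A α * Real.sqrt 2 :=
        mul_le_mul_of_nonneg_right (le_max_right _ _) (Real.sqrt_nonneg 2)
      have p3 : A α ≤ A α * Real.sqrt 2 := by
        nlinarith [hs2.1, (hA0 α).le]
      have p4 : |⟪x, α⟫| ≤ A α := le_max_left _ _
      linarith
    have hptprod : ∀ y ∈ ball x r,
        (∏ α ∈ R, |⟪y, α⟫| ^ (k α)) ≤ ∏ α ∈ R, (2 * Real.sqrt 2 * A α) ^ (k α) := by
      intro y hy
      apply Finset.prod_le_prod
      · intro α _
        exact Real.rpow_nonneg (abs_nonneg _) _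
      · intro α hα
        exact Real.rpow_le_rpow (abs_nonneg _) (hpt y hy α hα) (hk α)
    have hBnonneg : (0:ℝ) ≤ ∏ α ∈ R, (2 * Real.sqrt 2 * A α) ^ (k α) :=
      Finset.prod_nonneg fun α _ => Real.rpow_nonneg (by positivity) _
    calc (volume.withDensity (fun y => ENNReal.ofReal (∏ α ∈ R, |⟪y, α⟫| ^ (k α)))) (ball x r)
        = ∫⁻ y in ball x r, ENNReal.ofReal (∏ α ∈ R, |⟪y, α⟫| ^ (k α)) := hwball x r
      _ ≤ ∫⁻ _ in ball x r, ENNReal.ofReal (∏ α ∈ R, (2 * Real.sqrt 2 * A α) ^ (k α)) :=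
          setLIntegral_mono measurable_const fun y hy => ENNReal.ofReal_le_ofReal (hptprod y hy)
      _ = ENNReal.ofReal (∏ α ∈ R, (2 * Real.sqrt 2 * A α) ^ (k α)) * volume (ball x r) := by
          rw [setLIntegral_const]
      _ = ENNReal.ofReal (∏ α ∈ R, (2 * Real.sqrt 2 * A α) ^ (k α))
            * (ENNReal.ofReal (r ^ N) * V) := by rw [aux_volume_ball x hr]
      _ = ENNReal.ofReal ((∏ α ∈ R, (2 * Real.sqrt 2 * A α) ^ (k α)) * (r ^ N * V.toReal)) := by
          rw [ENNReal.ofReal_mul hBnonneg,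
            ENNReal.ofReal_mul (by positivity : (0:ℝ) ≤ r ^ N), ← hVeq]
      _ = ENNReal.ofReal (((∏ α ∈ R, (2 * Real.sqrt 2) ^ (k α)) * V.toReal)
            * (r ^ N * ∏ α ∈ R, A α ^ (k α))) := by
          congr 1
          have h1 : ∏ α ∈ R, (2 * Real.sqrt 2 * A α) ^ (k α)
              = (∏ α ∈ R, (2 * Real.sqrt 2) ^ (k α)) * ∏ α ∈ R, A α ^ (k α) := by
            rw [← Finset.prod_mul_distrib]
            exact Finset.prod_congr rfl fun α _ =>
              Real.mul_rpow (by positivity) (hA0 α).le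
          rw [h1]
          ring

/-- Growth estimate for balls:
`C⁻¹ (r₂/r₁)^N ≤ w(B(x,r₂))/w(B(x,r₁)) ≤ C (r₂/r₁)^𝐍` where `𝐍 = N + ∑_{α∈R} k α`. -/
theorem dunkl_ball_growth (N : ℕ) (R : Finset (EuclideanSpace ℝ (Fin N)))
    (hR0 : (0 : EuclideanSpace ℝ (Fin N)) ∉ R)
    (hRnorm : ∀ α ∈ R, ‖α‖ = Real.sqrt 2)
    (k : EuclideanSpace ℝ (Fin N) → ℝ) (hk : ∀ α, 0 ≤ k α)
    (w : Measure (EuclideanSpace ℝ (Fin N)))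
    (hw : w = volume.withDensity
      (fun x => ENNReal.ofReal (∏ α ∈ R, |⟪x, α⟫| ^ (k α))))
    (homdim : ℝ) (hhom : homdim = N + ∑ α ∈ R, k α) :
    ∃ C : ℝ, 1 ≤ C ∧ ∀ (x : EuclideanSpace ℝ (Fin N)) (r₁ r₂ : ℝ),
      0 < r₁ → r₁ ≤ r₂ →
      C⁻¹ * (r₂ / r₁) ^ (N : ℕ) * (w (ball x r₁)).toReal ≤ (w (ball x r₂)).toReal ∧
      (w (ball x r₂)).toReal ≤ C * (r₂ / r₁) ^ homdim * (w (ball x r₁)).toReal := by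
  subst hw
  obtain ⟨c₁, c₂, hc₁, hc₂, hbound⟩ := aux_core R hR0 hRnorm k hk
  set σ : ℝ := ∑ α ∈ R, k α with hσ
  have hσ0 : 0 ≤ σ := Finset.sum_nonneg fun α _ => hk α
  have hC21 : c₂ / c₁ ≤ max 1 (c₂ / c₁) := le_max_right _ _
  have hC1 : (1:ℝ) ≤ max 1 (c₂ / c₁) := le_max_left _ _
  refine ⟨max 1 (c₂ / c₁), hC1, ?_⟩
  intro x r₁ r₂ hr₁ hr₁₂
  have hr₂ : 0 < r₂ := lt_of_lt_of_le hr₁ hr₁₂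
  set q : ℝ := r₂ / r₁ with hqdef
  have hq0 : 0 < q := div_pos hr₂ hr₁
  have hq1 : 1 ≤ q := (one_le_div hr₁).2 hr₁₂
  have hqr : q * r₁ = r₂ := div_mul_cancel₀ _ hr₁.ne'
  set M : ℝ → ℝ := fun r => r ^ N * ∏ α ∈ R, (max |⟪x, α⟫| r) ^ (k α) with hMdef
  have hMpos : ∀ r, 0 < r → 0 < M r := by
    intro r hr
    have : 0 < ∏ α ∈ R, (max |⟪x, α⟫| r) ^ (k α) :=
      Finset.prod_pos fun α _ => Real.rpow_pos_of_pos (lt_of_lt_of_le hr (le_max_right _ _)) _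
    positivity
  obtain ⟨h1low, h1up⟩ := hbound x r₁ hr₁
  obtain ⟨h2low, h2up⟩ := hbound x r₂ hr₂
  set wd := volume.withDensity
    (fun y : EuclideanSpace ℝ (Fin N) => ENNReal.ofReal (∏ α ∈ R, |⟪y, α⟫| ^ (k α))) with hwd
  have hfin1 : wd (ball x r₁) ≠ ⊤ := (lt_of_le_of_lt h1up ENNReal.ofReal_lt_top).ne
  have hfin2 : wd (ball x r₂) ≠ ⊤ := (lt_of_le_of_lt h2up ENNReal.ofReal_lt_top).ne
  have t1low : c₁ * M r₁ ≤ (wd (ball x r₁)).toReal := by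
    have := ENNReal.toReal_mono hfin1 h1low
    rwa [ENNReal.toReal_ofReal (mul_pos hc₁ (hMpos r₁ hr₁)).le] at this
  have t2low : c₁ * M r₂ ≤ (wd (ball x r₂)).toReal := by
    have := ENNReal.toReal_mono hfin2 h2low
    rwa [ENNReal.toReal_ofReal (mul_pos hc₁ (hMpos r₂ hr₂)).le] at this
  have t1up : (wd (ball x r₁)).toReal ≤ c₂ * M r₁ := by
    have := ENNReal.toReal_mono ENNReal.ofReal_ne_top h1up
    rwa [ENNReal.toReal_ofReal (mul_pos hc₂ (hMpos r₁ hr₁)).le] at this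
  have t2up : (wd (ball x r₂)).toReal ≤ c₂ * M r₂ := by
    have := ENNReal.toReal_mono ENNReal.ofReal_ne_top h2up
    rwa [ENNReal.toReal_ofReal (mul_pos hc₂ (hMpos r₂ hr₂)).le] at this
  -- comparison of M at the two radii
  have hmax_nonneg : ∀ (α : EuclideanSpace ℝ (Fin N)) (r : ℝ), 0 < r →
      (0:ℝ) ≤ max |⟪x, α⟫| r := fun α r hr => le_trans hr.le (le_max_right _ _)
  have key2 : q ^ N * M r₁ ≤ M r₂ := by
    have hpow : q ^ N * r₁ ^ N = r₂ ^ N := by rw [← mul_pow, hqr]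
    have hprod : (∏ α ∈ R, (max |⟪x, α⟫| r₁) ^ (k α))
        ≤ ∏ α ∈ R, (max |⟪x, α⟫| r₂) ^ (k α) := by
      apply Finset.prod_le_prod
      · intro α _; exact Real.rpow_nonneg (hmax_nonneg α r₁ hr₁) _
      · intro α _
        exact Real.rpow_le_rpow (hmax_nonneg α r₁ hr₁)
          (max_le_max (le_refl _) hr₁₂) (hk α)
    calc q ^ N * M r₁ = (q ^ N * r₁ ^ N) * ∏ α ∈ R, (max |⟪x, α⟫| r₁) ^ (k α) := by
          rw [hMdef]; ring
      _ = r₂ ^ N * ∏ α ∈ R, (max |⟪x, α⟫| r₁) ^ (k α) := by rw [hpow]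
      _ ≤ r₂ ^ N * ∏ α ∈ R, (max |⟪x, α⟫| r₂) ^ (k α) :=
          mul_le_mul_of_nonneg_left hprod (by positivity)
      _ = M r₂ := rfl
  have key1 : M r₂ ≤ q ^ homdim * M r₁ := by
    have hhd : q ^ homdim = q ^ N * q ^ σ := by
      rw [hhom, Real.rpow_add hq0, Real.rpow_natCast]
    have hpow : r₂ ^ N = q ^ N * r₁ ^ N := by rw [← mul_pow, hqr]
    have hmaxle : ∀ α, max |⟪x, α⟫| r₂ ≤ q * max |⟪x, α⟫| r₁ := by
      intro α
      apply max_le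
      · exact le_trans (le_max_left _ r₁) (le_mul_of_one_le_left (hmax_nonneg α r₁ hr₁) hq1)
      · rw [← hqr]
        exact mul_le_mul_of_nonneg_left (le_max_right _ _) hq0.le
    have hprod : (∏ α ∈ R, (max |⟪x, α⟫| r₂) ^ (k α))
        ≤ q ^ σ * ∏ α ∈ R, (max |⟪x, α⟫| r₁) ^ (k α) := by
      have h1 : (∏ α ∈ R, (max |⟪x, α⟫| r₂) ^ (k α))
          ≤ ∏ α ∈ R, (q * max |⟪x, α⟫| r₁) ^ (k α) := by
        apply Finset.prod_le_prod
        · intro α _; exact Real.rpow_nonneg (hmax_nonneg α r₂ hr₂) _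
        · intro α _
          exact Real.rpow_le_rpow (hmax_nonneg α r₂ hr₂) (hmaxle α) (hk α)
      have h2 : (∏ α ∈ R, (q * max |⟪x, α⟫| r₁) ^ (k α))
          = q ^ σ * ∏ α ∈ R, (max |⟪x, α⟫| r₁) ^ (k α) := by
        rw [hσ, Real.rpow_sum_of_pos hq0, ← Finset.prod_mul_distrib]
        exact Finset.prod_congr rfl fun α _ =>
          Real.mul_rpow hq0.le (hmax_nonneg α r₁ hr₁)
      linarith [h1, h2.le, h2.ge]
    calc M r₂ = r₂ ^ N * ∏ α ∈ R, (max |⟪x, α⟫| r₂) ^ (k α) := rfl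
      _ = q ^ N * r₁ ^ N * ∏ α ∈ R, (max |⟪x, α⟫| r₂) ^ (k α) := by rw [← hpow]
      _ ≤ q ^ N * r₁ ^ N * (q ^ σ * ∏ α ∈ R, (max |⟪x, α⟫| r₁) ^ (k α)) :=
          mul_le_mul_of_nonneg_left hprod (by positivity)
      _ = q ^ homdim * M r₁ := by rw [hhd, hMdef]; ring
  have hP : (0:ℝ) < q ^ homdim :=
    Real.rpow_pos_of_pos hq0 _
  constructor
  · -- lower
    have hCinv : (max 1 (c₂/c₁))⁻¹ ≤ c₁ / c₂ := by
      rw [← inv_div c₂ c₁]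
      exact inv_anti₀ (div_pos hc₂ hc₁) hC21
    calc (max 1 (c₂/c₁))⁻¹ * q ^ N * (wd (ball x r₁)).toReal
        ≤ (c₁/c₂) * q ^ N * (wd (ball x r₁)).toReal := by
          apply mul_le_mul_of_nonneg_right _ ENNReal.toReal_nonneg
          exact mul_le_mul_of_nonneg_right hCinv (by positivity)
      _ ≤ (c₁/c₂) * q ^ N * (c₂ * M r₁) :=
          mul_le_mul_of_nonneg_left t1up (by positivity)
      _ = c₁ * (q ^ N * M r₁) := by field_simp
      _ ≤ c₁ * M r₂ := mul_le_mul_of_nonneg_left key2 hc₁.le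
      _ ≤ (wd (ball x r₂)).toReal := t2low
  · -- upper
    calc (wd (ball x r₂)).toReal ≤ c₂ * M r₂ := t2up
      _ ≤ c₂ * (q ^ homdim * M r₁) := mul_le_mul_of_nonneg_left key1 hc₂.le
      _ = (c₂/c₁) * q ^ homdim * (c₁ * M r₁) := by field_simp
      _ ≤ (c₂/c₁) * q ^ homdim * (wd (ball x r₁)).toReal :=
          mul_le_mul_of_nonneg_left t1low (by positivity)
      _ ≤ (max 1 (c₂/c₁)) * q ^ homdim * (wd (ball x r₁)).toReal := by
          apply mul_le_mul_of_nonneg_right _ ENNReal.toReal_nonneg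
          exact mul_le_mul_of_nonneg_right hC21 hP.le
end

section
/- Monotone comparability of m on its own scale: assume m : ℝ^N → (0,∞) satisfies the inequality m(y) ≤ C m(x)(1 + m(x)‖x−y‖)^κ for all x, y and some constants C, κ > 0. Then there is a constant C' > 0 such that m(y) ≥ (C')^{-1} m(x) (1 + m(x)‖x−y‖)^{−κ/(1+κ)} for all x, y ∈ ℝ^N. -/
/-- If `m : ℝ^N → (0,∞)` satisfies `m(y) ≤ C m(x)(1 + m(x)‖x−y‖)^κ` for all `x, y`,
then there is `C' > 0` with `m(y) ≥ C'⁻¹ m(x)(1 + m(x)‖x−y‖)^{−κ/(1+κ)}`. -/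
theorem aux_function_lower_growth (N : ℕ)
    (m : EuclideanSpace ℝ (Fin N) → ℝ) (hm : ∀ x, 0 < m x)
    (C κ : ℝ) (hC : 0 < C) (hκ : 0 < κ)
    (hupper : ∀ x y, m y ≤ C * m x * (1 + m x * ‖x - y‖) ^ κ) :
    ∃ C' : ℝ, 0 < C' ∧ ∀ x y,
      m y ≥ C'⁻¹ * m x * (1 + m x * ‖x - y‖) ^ (-(κ / (1 + κ))) := by
  have hC1 : 1 ≤ C := by
    have h := hupper 0 0
    simp only [sub_self, norm_zero, mul_zero, add_zero, Real.one_rpow, mul_one] at h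
    have := hm 0
    nlinarith
  have h2κ : (1:ℝ) ≤ 2 ^ κ := Real.one_le_rpow one_le_two hκ.le
  have h2κ0 : (0:ℝ) < 2 ^ κ := lt_of_lt_of_le one_pos h2κ
  set C' := C * 2 ^ κ with hC'def
  have hC'1 : 1 ≤ C' := by nlinarith
  have hC'pos : 0 < C' := lt_of_lt_of_le one_pos hC'1
  have hκ1 : (0:ℝ) < 1 + κ := by linarith
  refine ⟨C', hC'pos, fun x y => ?_⟩
  have ha := hm x
  have hb := hm y
  set a := m x
  set b := m y
  set r := ‖x - y‖ with hrdef
  have hr0 : 0 ≤ r := norm_nonneg _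
  have ht0 : 0 ≤ a * r := by positivity
  have h1t : (1:ℝ) ≤ 1 + a * r := by linarith
  have h1t0 : (0:ℝ) < 1 + a * r := by linarith
  have hswap : a ≤ C * b * (1 + b * r) ^ κ := by
    have h := hupper y x
    rwa [norm_sub_rev] at h
  -- the negative-power factor is at most 1
  have hfac1 : (1 + a * r) ^ (-(κ / (1 + κ))) ≤ 1 :=
    Real.rpow_le_one_of_one_le_of_nonpos h1t
      (neg_nonpos.mpr (div_nonneg hκ.le hκ1.le))
  rcases le_or_gt (b * r) 1 with hcase | hcase
  · -- case b*r ≤ 1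
    have h2 : (1 + b * r) ^ κ ≤ 2 ^ κ :=
      Real.rpow_le_rpow (by positivity) (by linarith) hκ.le
    have hab : a ≤ C' * b := by
      calc a ≤ C * b * (1 + b * r) ^ κ := hswap
        _ ≤ C * b * 2 ^ κ := by
            have h0 : (0:ℝ) ≤ C * b := by positivity
            exact mul_le_mul_of_nonneg_left h2 h0
        _ = C' * b := by ring
    have : C'⁻¹ * a ≤ b := by
      rw [inv_mul_le_iff₀ hC'pos]; linarith [hab]
    calc C'⁻¹ * a * (1 + a * r) ^ (-(κ / (1 + κ)))
        ≤ C'⁻¹ * a * 1 := by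
          have : (0:ℝ) ≤ C'⁻¹ * a := by positivity
          nlinarith [hfac1]
      _ = C'⁻¹ * a := mul_one _
      _ ≤ b := this
  · -- case 1 < b*r
    have hrpos : 0 < r := by
      rcases lt_or_ge 0 r with h | h
      · exact h
      · exfalso; nlinarith
    have h2 : (1 + b * r) ^ κ ≤ 2 ^ κ * (b ^ κ * r ^ κ) := by
      have h3 : 1 + b * r ≤ 2 * (b * r) := by linarith
      have h4 : (1 + b * r) ^ κ ≤ (2 * (b * r)) ^ κ :=
        Real.rpow_le_rpow (by positivity) h3 hκ.le
      have h5 : (2 * (b * r)) ^ κ = 2 ^ κ * (b ^ κ * r ^ κ) := by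
        rw [Real.mul_rpow (by norm_num) (by positivity),
            Real.mul_rpow hb.le hr0]
      linarith [h4, h5.le, h5.ge]
    have key : a ≤ C' * b ^ (1 + κ) * r ^ κ := by
      have hb1κ : b ^ (1 + κ) = b * b ^ κ := by
        rw [Real.rpow_add hb, Real.rpow_one]
      calc a ≤ C * b * (1 + b * r) ^ κ := hswap
        _ ≤ C * b * (2 ^ κ * (b ^ κ * r ^ κ)) := by
            have : (0:ℝ) < C * b := by positivity
            nlinarith
        _ = C' * b ^ (1 + κ) * r ^ κ := by rw [hb1κ]; ring
    -- raise the target inequality to power (1+κ)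
    rw [ge_iff_le, ← Real.rpow_le_rpow_iff (by positivity) hb.le hκ1]
    have hlhs : (C'⁻¹ * a * (1 + a * r) ^ (-(κ / (1 + κ)))) ^ (1 + κ)
        = C'⁻¹ ^ (1 + κ) * a ^ (1 + κ) * (1 + a * r) ^ (-κ) := by
      rw [Real.mul_rpow (by positivity) (by positivity),
          Real.mul_rpow (by positivity) ha.le, ← Real.rpow_mul h1t0.le,
          (show -(κ / (1 + κ)) * (1 + κ) = -κ by
            rw [neg_mul, div_mul_cancel₀ _ hκ1.ne'])]
    rw [hlhs]
    -- from key : b^(1+κ) ≥ a / (C' * r^κ)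
    have hrκ : (0:ℝ) < r ^ κ := Real.rpow_pos_of_pos hrpos κ
    have hb1κpos : (0:ℝ) < b ^ (1 + κ) := Real.rpow_pos_of_pos hb _
    have hstep : a / (C' * r ^ κ) ≤ b ^ (1 + κ) := by
      rw [div_le_iff₀ (by positivity)]
      calc a ≤ C' * b ^ (1 + κ) * r ^ κ := key
        _ = b ^ (1 + κ) * (C' * r ^ κ) := by ring
    refine le_trans ?_ hstep
    -- need : C'⁻¹^(1+κ) * a^(1+κ) * (1+a*r)^(-κ) ≤ a / (C' * r^κ)
    have hmain : (a * r / C') ^ κ ≤ (1 + a * r) ^ κ := by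
      apply Real.rpow_le_rpow (by positivity) _ hκ.le
      calc a * r / C' ≤ a * r / 1 := by
            apply div_le_div_of_nonneg_left ht0 one_pos hC'1
        _ = a * r := div_one _
        _ ≤ 1 + a * r := by linarith
    have hexp : (a * r / C') ^ κ = a ^ κ * r ^ κ / C' ^ κ := by
      rw [Real.div_rpow (by positivity) hC'pos.le,
          Real.mul_rpow ha.le hr0]
    rw [hexp] at hmain
    -- turn hmain into the goal
    have hC'κ : (0:ℝ) < C' ^ κ := Real.rpow_pos_of_pos hC'pos κ
    have h1tκ : (0:ℝ) < (1 + a * r) ^ κ := Real.rpow_pos_of_pos h1t0 κ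
    have hC'inv : C'⁻¹ ^ (1 + κ) = 1 / (C' * C' ^ κ) := by
      rw [Real.inv_rpow hC'pos.le, Real.rpow_add hC'pos, Real.rpow_one]
      field_simp
    have haexp : a ^ (1 + κ) = a * a ^ κ := by
      rw [Real.rpow_add ha, Real.rpow_one]
    have hneg : (1 + a * r) ^ (-κ) = 1 / (1 + a * r) ^ κ := by
      rw [Real.rpow_neg h1t0.le]; field_simp
    rw [hC'inv, haexp, hneg]
    have hmain' : a ^ κ * r ^ κ ≤ C' ^ κ * (1 + a * r) ^ κ := by
      rw [div_le_iff₀ hC'κ] at hmain; linarith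
    have heq : 1 / (C' * C' ^ κ) * (a * a ^ κ) * (1 / (1 + a * r) ^ κ)
        = (a * a ^ κ) / (C' * C' ^ κ * (1 + a * r) ^ κ) := by
      field_simp
    rw [heq, div_le_div_iff₀ (by positivity) (by positivity)]
    have haκ : (0:ℝ) < a ^ κ := Real.rpow_pos_of_pos ha κ
    nlinarith [mul_le_mul_of_nonneg_left hmain' (by positivity : (0:ℝ) ≤ a * C')]
end
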